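/- Let k, m, ℓ be natural numbers with ℓ ≥ 1, and let H ⊆ [k]^m be a nonempty finite class with ℓ-exponential dimension d_E. Then there exists an ℓ-list orientation σ of the one-inclusion graph G(H) whose maximum ℓ-outdegree is at most d_E. -/

import Mathlib

/-- The edge of the one-inclusion graph of `H` in direction `i` through the vertex `g`:
all `h ∈ H` agreeing with `g` outside coordinate `i`. -/
def edgeOf {m k : ℕ} (H : Finset (Fin m → Fin k)) (i : Fin m) (g : Fin m → Fin k) :
    Finset (Fin m → Fin k) :=
  H.filter fun h => ∀ j, j ≠ i → h j = g j

/-- The edges of the one-inclusion graph of `H`, each recorded together with its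
direction: for every direction `i` and every vertex `g ∈ H` we get the (nonempty) edge
`e_{i,f}` where `f` is the restriction of `g` to `[m] \ {i}`. -/
def oigEdges {m k : ℕ} (H : Finset (Fin m → Fin k)) :
    Finset (Fin m × Finset (Fin m → Fin k)) :=
  (Finset.univ ×ˢ H).image fun p => (p.1, edgeOf H p.1 p.2)

/-- The shifting average `ℓ`-degree of `H`:
`savd^ℓ(H) = (1/|H|) ∑_{e edge of G(H)} max(|e| - ℓ, 0)`. -/
noncomputable def savd {m k : ℕ} (ℓ : ℕ) (H : Finset (Fin m → Fin k)) : ℝ :=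
  (H.card : ℝ)⁻¹ * ∑ e ∈ oigEdges H, ((e.2.card - ℓ : ℕ) : ℝ)

/-- The `ℓ`-exponential dimension of `H ⊆ [k]^m`: the largest `d` such that for some
coordinates `i_1, …, i_d ∈ [m]` the projection of `H` has at least `(ℓ+1)^d` elements. -/
noncomputable def expDim {m k : ℕ} (ℓ : ℕ) (H : Finset (Fin m → Fin k)) : ℕ :=
  sSup {d : ℕ | ∃ t : Fin d → Fin m,
    (ℓ + 1) ^ d ≤ (H.image fun h => fun j => h (t j)).card}

/-!
Choosing `σ e` amounts to choosing `#e - ℓ` vertices of each edge `e`, the ones `e` points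
away from, so that no vertex is chosen more than `d = d_E(H)` times. By a Hall-type theorem,
proved by induction on the total demand with uncrossing of tight sets, this is possible once
`∑ₑ ((#e - ℓ) - #(e \ W)) ≤ d * #W` for every vertex set `W`. The left side is at most the
`ℓ`-excess `∑ₑ (#e - ℓ)` of `G(H ∩ W)`, so it suffices to prove the density bound
`∑ₑ (#e - ℓ) ≤ d_E(H) * #H`.

The density bound is proved by induction on `m`. Cutting `H` along its last coordinate into
the layers `T_t` of initial segments with at least `t` extensions, the last direction
contributes `∑_{t > ℓ} #T_t`; in every other direction the slices of an edge are majorized by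
its traces on the layers, so that direction is dominated by the layers' edges; and a nonempty
layer `T_t` with `t > ℓ` has `d_E(T_t) < d_E(H)`, since each of its points has `ℓ + 1`
extensions.
-/

open Finset Function

section Counting
variable {γ : Type*}

theorem sum_tsub_eq_sum_card_filter_le (s : Finset γ) (f : γ → ℕ) {a K : ℕ}
    (hf : ∀ g ∈ s, f g ≤ K) :
    ∑ g ∈ s, (f g - a) = ∑ t ∈ Ioc a K, #{g ∈ s | t ≤ f g} := by
  simp only [card_filter]
  rw [sum_comm]
  refine sum_congr rfl fun g hg => ?_
  rw [← card_filter, show {t ∈ Ioc a K | t ≤ f g} = Ioc a (f g) by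
    ext t; simp only [mem_filter, mem_Ioc]; have := hf g hg; omega, Nat.card_Ioc]

theorem exists_subset_card_eq_forall_le [DecidableEq γ] (s : Finset γ) (w : γ → ℕ) {n : ℕ}
    (hn : n ≤ #s) : ∃ P ⊆ s, #P = n ∧ ∀ g ∈ P, ∀ g' ∈ s \ P, w g' ≤ w g := by
  induction n with
  | zero => exact ⟨∅, empty_subset _, card_empty, by simp⟩
  | succ n ih =>
    obtain ⟨P, hPs, hPcard, hPtop⟩ := ih (by omega)
    obtain ⟨g₀, hg₀, hg₀max⟩ := exists_max_image (s \ P) w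
      (by rw [← card_pos, card_sdiff_of_subset hPs]; omega)
    refine ⟨insert g₀ P, insert_subset (mem_sdiff.1 hg₀).1 hPs, ?_, ?_⟩
    · rw [card_insert_of_notMem (mem_sdiff.1 hg₀).2, hPcard]
    · intro g hg g' hg'
      rw [sdiff_insert] at hg'
      rcases mem_insert.1 hg with rfl | hgP
      · exact hg₀max g' (mem_of_mem_erase hg')
      · exact hPtop g hgP g' (mem_of_mem_erase hg')

variable {X β : Type*} [DecidableEq γ] [Fintype β]

theorem card_filter_eq_le_card {r : X → γ} {col : X → β}
    (hinj : Injective fun x => (r x, col x)) (S : Finset X) (g : γ) :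
    #{x ∈ S | r x = g} ≤ Fintype.card β := by
  refine (card_le_card_of_injOn col (fun _ _ => mem_univ _) ?_).trans_eq card_univ
  intro x hx x' hx' h
  exact hinj (Prod.ext ((mem_filter.1 hx).2.trans (mem_filter.1 hx').2.symm) h)

theorem sum_min_card_filter_le_sum_min [DecidableEq β] {r : X → γ} {col : X → β}
    (hinj : Injective fun x => (r x, col x)) (S : Finset X) (ℓ : ℕ) :
    ∑ t ∈ Ioc 0 (Fintype.card β), min #{g ∈ S.image r | t ≤ #{x ∈ S | r x = g}} ℓ ≤
      ∑ y, min #{x ∈ S | col x = y} ℓ := by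
  set R := S.image r
  set row : γ → ℕ := fun g => #{x ∈ S | r x = g}
  obtain ⟨P, -, hPcard, hPtop⟩ := exists_subset_card_eq_forall_le R row (min_le_right ℓ #R)
  have hrows : ∑ t ∈ Ioc 0 (Fintype.card β), #{g ∈ P | t ≤ row g} = #{x ∈ S | r x ∈ P} := by
    rw [← sum_card_fiberwise_eq_card_filter, ← sum_tsub_eq_sum_card_filter_le P row
      fun g _ => card_filter_eq_le_card hinj S g]
    simp [row]
  have hcols : #{x ∈ S | r x ∈ P} = ∑ y, #{x ∈ S | r x ∈ P ∧ col x = y} := by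
    rw [card_eq_sum_card_fiberwise (f := col) (t := univ) fun _ _ => mem_univ _]
    simp only [filter_filter]
  calc ∑ t ∈ Ioc 0 (Fintype.card β), min #{g ∈ R | t ≤ row g} ℓ
      ≤ ∑ t ∈ Ioc 0 (Fintype.card β), #{g ∈ P | t ≤ row g} := by
        refine sum_le_sum fun t _ => ?_
        by_cases hall : ∀ g ∈ P, t ≤ row g
        · rw [filter_true_of_mem hall, hPcard, min_comm ℓ]
          exact min_le_min_right ℓ (card_le_card (filter_subset _ _))
        · push Not at hall
          obtain ⟨g₀, hg₀P, hg₀⟩ := hall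
          refine (min_le_left _ _).trans (card_le_card fun g hg => ?_)
          obtain ⟨hgR, hgt⟩ := mem_filter.1 hg
          refine mem_filter.2 ⟨?_, hgt⟩
          by_contra hgP
          have := hPtop g₀ hg₀P g (mem_sdiff.2 ⟨hgR, hgP⟩)
          omega
    _ = ∑ y, #{x ∈ S | r x ∈ P ∧ col x = y} := by rw [hrows, hcols]
    _ ≤ ∑ y, min #{x ∈ S | col x = y} ℓ := by
        refine sum_le_sum fun y _ => le_min ?_ ?_
        · exact card_le_card (monotone_filter_right _ fun _ _ h => h.2)
        · refine (card_le_card_of_injOn r (fun x hx => (mem_filter.1 hx).2.1) ?_).trans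
            (hPcard.trans_le (min_le_left _ _))
          intro x hx x' hx' h
          exact hinj (Prod.ext h ((mem_filter.1 hx).2.2.trans (mem_filter.1 hx').2.2.symm))

/-- The column counts of the cells `S` of a grid are majorized by the conjugate of its row
counts. -/
theorem sum_card_col_tsub_le [DecidableEq β] {r : X → γ} {col : X → β}
    (hinj : Injective fun x => (r x, col x)) (S : Finset X) (ℓ : ℕ) :
    ∑ y, (#{x ∈ S | col x = y} - ℓ) ≤
      ∑ t ∈ Ioc 0 (Fintype.card β), (#{g ∈ S.image r | t ≤ #{x ∈ S | r x = g}} - ℓ) := by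
  have hmin := sum_min_card_filter_le_sum_min hinj S ℓ
  have htot_col : ∑ y, #{x ∈ S | col x = y} = #S :=
    (card_eq_sum_card_fiberwise fun _ _ => mem_univ _).symm
  have htot_row :
      ∑ t ∈ Ioc 0 (Fintype.card β), #{g ∈ S.image r | t ≤ #{x ∈ S | r x = g}} = #S := by
    rw [← sum_tsub_eq_sum_card_filter_le _ _ fun g _ => card_filter_eq_le_card hinj S g]
    simpa using (card_eq_sum_card_image r S).symm
  have hsplit_col := sum_congr rfl fun y (_ : y ∈ univ) =>
    Nat.sub_add_min_cancel #{x ∈ S | col x = y} ℓ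
  have hsplit_row := sum_congr rfl fun t (_ : t ∈ Ioc 0 (Fintype.card β)) =>
    Nat.sub_add_min_cancel #{g ∈ S.image r | t ≤ #{x ∈ S | r x = g}} ℓ
  rw [sum_add_distrib] at hsplit_col hsplit_row
  omega

end Counting

theorem sum_add_eq_sum_add_of_eq_of_ne {ι M : Type*} [AddCommMonoid M] [DecidableEq ι]
    {s : Finset ι} {f f' : ι → M} {i : ι} (hi : i ∈ s) (h : ∀ j ∈ s, j ≠ i → f' j = f j) :
    ∑ j ∈ s, f' j + f i = ∑ j ∈ s, f j + f' i := by
  rw [← add_sum_erase s f' hi, ← add_sum_erase s f hi,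
    sum_congr rfl fun j hj => h j (mem_of_mem_erase hj) (ne_of_mem_erase hj)]
  abel

section Selection
variable {α V : Type*} [DecidableEq V]

/-- `q a - #(E a \ W)` is the least number of vertices of `W` among any `q a` vertices of
`E a`, so this is necessary for choosing `q a` vertices of each `E a` while using every
vertex `v` at most `c v` times. -/
def HallCondition (ι : Finset α) (E : α → Finset V) (q : α → ℕ) (c : V → ℕ) : Prop :=
  ∀ W : Finset V, ∑ a ∈ ι, (q a - #(E a \ W)) ≤ ∑ v ∈ W, c v

def IsTight (ι : Finset α) (E : α → Finset V) (q : α → ℕ) (c : V → ℕ) (W : Finset V) : Prop :=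
  ∑ a ∈ ι, (q a - #(E a \ W)) = ∑ v ∈ W, c v

theorem tsub_card_sdiff_add_tsub_card_sdiff_le (n : ℕ) (A W₁ W₂ : Finset V) :
    (n - #(A \ W₁)) + (n - #(A \ W₂)) ≤ (n - #(A \ (W₁ ∪ W₂))) + (n - #(A \ (W₁ ∩ W₂))) := by
  rw [sdiff_union_distrib, sdiff_inter_distrib_right]
  have := card_inter_add_card_union (A \ W₁) (A \ W₂)
  have := card_le_card (inter_subset_left (s₁ := A \ W₁) (s₂ := A \ W₂))
  have := card_le_card (inter_subset_right (s₁ := A \ W₁) (s₂ := A \ W₂))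
  omega

namespace HallCondition
variable {ι : Finset α} {E : α → Finset V} {q : α → ℕ} {c : V → ℕ}

/-- Uncrossing: `W ↦ q a - #(E a \ W)` is supermodular, which forces equality throughout
when `W₁` and `W₂` are tight. -/
theorem isTight_union (h : HallCondition ι E q c) {a₀ : α} (ha₀ : a₀ ∈ ι) {W₁ W₂ : Finset V}
    (h₁ : IsTight ι E q c W₁ ∧ q a₀ - #(E a₀ \ W₁) = 0)
    (h₂ : IsTight ι E q c W₂ ∧ q a₀ - #(E a₀ \ W₂) = 0) :
    IsTight ι E q c (W₁ ∪ W₂) ∧ q a₀ - #(E a₀ \ (W₁ ∪ W₂)) = 0 := by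
  unfold IsTight at *
  have hsuper := fun a (_ : a ∈ ι) => tsub_card_sdiff_add_tsub_card_sdiff_le (q a) (E a) W₁ W₂
  have hsum := sum_le_sum hsuper
  have hc : ∑ v ∈ W₁ ∪ W₂, c v + ∑ v ∈ W₁ ∩ W₂, c v = ∑ v ∈ W₁, c v + ∑ v ∈ W₂, c v :=
    sum_union_inter
  have hu := h (W₁ ∪ W₂)
  have hi := h (W₁ ∩ W₂)
  simp only [sum_add_distrib] at hsum
  have heq := (sum_eq_sum_iff_of_le hsuper).1 (by rw [sum_add_distrib, sum_add_distrib]; omega)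
    a₀ ha₀
  omega

theorem isTight_of_sum_eq_zero (h : HallCondition ι E q c) {a₀ : α} (ha₀ : a₀ ∈ ι)
    {W : Finset V} (hW : ∑ v ∈ W, c v = 0) :
    IsTight ι E q c W ∧ q a₀ - #(E a₀ \ W) = 0 := by
  have hle := h W
  rw [hW, Nat.le_zero, sum_eq_zero_iff] at hle
  exact ⟨by rw [IsTight, hW, sum_eq_zero_iff]; exact hle, hle a₀ ha₀⟩

theorem exists_mem_forall_isTight (h : HallCondition ι E q c) {a₀ : α} (ha₀ : a₀ ∈ ι)
    (hq : 0 < q a₀) : ∃ v₀ ∈ E a₀, 0 < c v₀ ∧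
      ∀ W, v₀ ∈ W → IsTight ι E q c W → 0 < q a₀ - #(E a₀ \ W) := by
  by_contra! hbad
  set Z : Finset V → Prop := fun W => IsTight ι E q c W ∧ q a₀ - #(E a₀ \ W) = 0
  have hZ : ∀ v ∈ E a₀, ∃ W, v ∈ W ∧ Z W := by
    intro v hv
    rcases Nat.eq_zero_or_pos (c v) with hcv | hcv
    · exact ⟨{v}, mem_singleton_self v, h.isTight_of_sum_eq_zero ha₀ (by simpa using hcv)⟩
    · obtain ⟨W, hvW, htight, hzero⟩ := hbad v hv hcv
      exact ⟨W, hvW, htight, Nat.le_zero.1 hzero⟩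
  choose! Wv hvWv hZWv using hZ
  -- their union is again tight with deficiency `0` at `a₀`, yet it covers `E a₀`
  have hsup : Z ((E a₀).sup Wv) :=
    sup_induction (h.isTight_of_sum_eq_zero ha₀ sum_empty)
      (fun W₁ h₁ W₂ h₂ => h.isTight_union ha₀ h₁ h₂) hZWv
  have hcover : E a₀ \ (E a₀).sup Wv = ∅ :=
    sdiff_eq_empty_iff_subset.2 fun v hv => le_sup (f := Wv) hv (hvWv v hv)
  have := hsup.2
  rw [hcover, card_empty] at this
  omega

theorem assign [DecidableEq α] (h : HallCondition ι E q c) {a₀ : α} {v₀ : V} (ha₀ : a₀ ∈ ι)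
    (hv₀E : v₀ ∈ E a₀) (hcv₀ : 0 < c v₀)
    (hgood : ∀ W, v₀ ∈ W → IsTight ι E q c W → 0 < q a₀ - #(E a₀ \ W)) :
    HallCondition ι (update E a₀ ((E a₀).erase v₀)) (update q a₀ (q a₀ - 1))
      (update c v₀ (c v₀ - 1)) := by
  intro W
  have hι := sum_add_eq_sum_add_of_eq_of_ne ha₀
    (f := fun a => q a - #(E a \ W))
    (f' := fun a => update q a₀ (q a₀ - 1) a - #(update E a₀ ((E a₀).erase v₀) a \ W))
    fun a _ ha => by simp only [update_of_ne ha]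
  simp only [update_self, erase_sdiff_comm] at hι
  have hW := h W
  by_cases hv₀W : v₀ ∈ W
  · have hc := sum_add_eq_sum_add_of_eq_of_ne hv₀W (f := c) (f' := update c v₀ (c v₀ - 1))
      fun v _ hv => update_of_ne hv _ _
    rw [update_self] at hc
    rw [erase_eq_of_notMem fun hv => (mem_sdiff.1 hv).2 hv₀W] at hι
    rcases hW.lt_or_eq with hlt | htight
    · omega
    · have := hgood W hv₀W htight
      omega
  · have hc : ∑ v ∈ W, update c v₀ (c v₀ - 1) v = ∑ v ∈ W, c v :=
      sum_congr rfl fun v hv => update_of_ne (ne_of_mem_of_not_mem hv hv₀W) _ _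
    have := card_erase_add_one (mem_sdiff.2 ⟨hv₀E, hv₀W⟩)
    omega

end HallCondition

theorem card_filter_mem_update_insert_le [DecidableEq α] (ι : Finset α) (X : α → Finset V)
    (a₀ : α) (v₀ v : V) :
    #{a ∈ ι | v ∈ update X a₀ (insert v₀ (X a₀)) a} ≤
      #{a ∈ ι | v ∈ X a} + if v = v₀ then 1 else 0 := by
  split_ifs with hv
  · refine (card_le_card fun a ha => ?_).trans (card_insert_le a₀ _)
    rcases eq_or_ne a a₀ with rfl | hne
    · exact mem_insert_self _ _
    · simpa [update_of_ne hne] using Or.inr ha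
  · refine card_le_card fun a ha => ?_
    rcases eq_or_ne a a₀ with rfl | hne <;> simp_all

theorem HallCondition.exists_selection {ι : Finset α} {E : α → Finset V} {q : α → ℕ}
    {c : V → ℕ} (h : HallCondition ι E q c) :
    ∃ X : α → Finset V, (∀ a ∈ ι, X a ⊆ E a ∧ #(X a) = q a) ∧
      ∀ v, #{a ∈ ι | v ∈ X a} ≤ c v := by
  classical
  induction hN : ∑ a ∈ ι, q a generalizing E q c with
  | zero =>
    rw [sum_eq_zero_iff] at hN
    exact ⟨fun _ => ∅, fun a ha => ⟨empty_subset _, (hN a ha).symm⟩, fun v => by simp⟩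
  | succ N ih =>
    obtain ⟨a₀, ha₀, hq⟩ : ∃ a₀ ∈ ι, 0 < q a₀ := by
      by_contra! hzero
      rw [sum_eq_zero fun a ha => Nat.le_zero.1 (hzero a ha)] at hN
      exact N.succ_ne_zero hN.symm
    obtain ⟨v₀, hv₀E, hcv₀, hgood⟩ := h.exists_mem_forall_isTight ha₀ hq
    have hN' : ∑ a ∈ ι, update q a₀ (q a₀ - 1) a = N := by
      have := sum_add_eq_sum_add_of_eq_of_ne ha₀ (f := q) (f' := update q a₀ (q a₀ - 1))
        fun a _ ha => update_of_ne ha _ _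
      rw [update_self] at this
      omega
    obtain ⟨X', hX', hdeg'⟩ := ih (h.assign ha₀ hv₀E hcv₀ hgood) hN'
    have hX'a₀ : X' a₀ ⊆ (E a₀).erase v₀ := by simpa using (hX' a₀ ha₀).1
    refine ⟨update X' a₀ (insert v₀ (X' a₀)), fun a ha => ?_, fun v => ?_⟩
    · rcases eq_or_ne a a₀ with rfl | hne
      · have hcard := (hX' a ha).2
        rw [update_self] at hcard ⊢
        refine ⟨insert_subset hv₀E (hX'a₀.trans (erase_subset _ _)), ?_⟩
        rw [card_insert_of_notMem fun hv => by simpa using hX'a₀ hv]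
        omega
      · simpa [update_of_ne hne] using hX' a ha
    · refine (card_filter_mem_update_insert_le ι X' a₀ v₀ v).trans ?_
      have := hdeg' v
      split_ifs with hv
      · subst hv
        rw [update_self] at this
        omega
      · rwa [update_of_ne hv] at this

end Selection

section ExpDim
variable {m k ℓ : ℕ}

theorem bddAbove_expDim (hℓ : 1 ≤ ℓ) (H : Finset (Fin m → Fin k)) :
    BddAbove {d : ℕ | ∃ t : Fin d → Fin m,
      (ℓ + 1) ^ d ≤ (H.image fun h => fun j => h (t j)).card} := by
  refine ⟨#H, fun d ⟨t, ht⟩ => ?_⟩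
  have := Nat.lt_pow_self (n := d) (by omega : 1 < ℓ + 1)
  exact (this.trans_le (ht.trans card_image_le)).le

theorem le_expDim (hℓ : 1 ≤ ℓ) {H : Finset (Fin m → Fin k)} {d : ℕ} (t : Fin d → Fin m)
    (ht : (ℓ + 1) ^ d ≤ (H.image fun h => fun j => h (t j)).card) : d ≤ expDim ℓ H :=
  le_csSup (bddAbove_expDim hℓ H) ⟨t, ht⟩

theorem exists_expDim_witness (hℓ : 1 ≤ ℓ) {H : Finset (Fin m → Fin k)} (hne : H.Nonempty) :
    ∃ t : Fin (expDim ℓ H) → Fin m,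
      (ℓ + 1) ^ expDim ℓ H ≤ (H.image fun h => fun j => h (t j)).card :=
  Nat.sSup_mem (s := {d : ℕ | ∃ t : Fin d → Fin m,
      (ℓ + 1) ^ d ≤ (H.image fun h => fun j => h (t j)).card})
    ⟨0, Fin.elim0, (pow_zero _).trans_le (card_pos.2 (hne.image _))⟩ (bddAbove_expDim hℓ H)

theorem expDim_image_comp_le {m' : ℕ} (hℓ : 1 ≤ ℓ) (H : Finset (Fin m → Fin k))
    (φ : Fin m' → Fin m) : expDim ℓ (H.image fun h => h ∘ φ) ≤ expDim ℓ H := by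
  unfold expDim
  refine csSup_le_csSup' (bddAbove_expDim hℓ H) ?_
  rintro d ⟨t, ht⟩
  refine ⟨φ ∘ t, ?_⟩
  rwa [image_image] at ht

theorem expDim_mono (hℓ : 1 ≤ ℓ) {W H : Finset (Fin m → Fin k)} (hWH : W ⊆ H) :
    expDim ℓ W ≤ expDim ℓ H :=
  csSup_le_csSup' (bddAbove_expDim hℓ H) fun _ ⟨t, ht⟩ =>
    ⟨t, ht.trans (card_le_card (image_subset_image hWH))⟩

end ExpDim

section Fibers
variable {X Y : Type*} [DecidableEq X] [DecidableEq Y] [Fintype Y] {M : Type*} [AddCommMonoid M]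

theorem sum_image_filter_eq_sum_fiber (s : Finset X) (π : X → Y) (G : Finset X → M)
    (hG : G ∅ = 0) :
    ∑ e ∈ s.image (fun x => {x' ∈ s | π x' = π x}), G e = ∑ y, G {x ∈ s | π x = y} := by
  rw [show s.image (fun x => {x' ∈ s | π x' = π x}) =
      (s.image π).image (fun y => {x ∈ s | π x = y}) by rw [image_image]; rfl, sum_image]
  · refine sum_subset (subset_univ _) fun y _ hy => ?_
    rw [filter_eq_empty_iff.2 fun x hx hxy => hy (mem_image.2 ⟨x, hx, hxy⟩), hG]
  · intro y₁ hy₁ y₂ _ heq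
    obtain ⟨x, hx, rfl⟩ := mem_image.1 hy₁
    have hmem : x ∈ {x' ∈ s | π x' = π x} := mem_filter.2 ⟨hx, rfl⟩
    rw [show {x' ∈ s | π x' = π x} = {x' ∈ s | π x' = y₂} from heq] at hmem
    exact (mem_filter.1 hmem).2

theorem sum_fiber_congr {Y' : Type*} [DecidableEq Y'] [Fintype Y'] (s : Finset X)
    {π : X → Y} {π' : X → Y'} (h : ∀ x x', π x' = π x ↔ π' x' = π' x) (G : Finset X → M)
    (hG : G ∅ = 0) : ∑ y, G {x ∈ s | π x = y} = ∑ y', G {x ∈ s | π' x = y'} := by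
  rw [← sum_image_filter_eq_sum_fiber s π G hG, ← sum_image_filter_eq_sum_fiber s π' G hG]
  simp only [h]

end Fibers

def dropCoord {ι β : Type*} (i : ι) (h : ι → β) : {j // j ≠ i} → β := fun j => h j

theorem dropCoord_eq_iff {ι β : Type*} {i : ι} {h h' : ι → β} :
    dropCoord i h' = dropCoord i h ↔ ∀ j, j ≠ i → h' j = h j := by
  simp [dropCoord, funext_iff]

section OneInclusion
variable {m k : ℕ}

/-- The edges of `G(H)` in direction `i` are the nonempty fibres of `dropCoord i`, so
`∑ i, dirExcess ℓ H i = #H * savd ℓ H`. -/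
def dirExcess (ℓ : ℕ) (H : Finset (Fin m → Fin k)) (i : Fin m) : ℕ :=
  ∑ f, (#{h ∈ H | dropCoord i h = f} - ℓ)

theorem edgeOf_eq_filter (H : Finset (Fin m → Fin k)) (i : Fin m) (g : Fin m → Fin k) :
    edgeOf H i g = {h ∈ H | dropCoord i h = dropCoord i g} :=
  filter_congr fun _ _ => dropCoord_eq_iff.symm

theorem sum_oigEdges {M : Type*} [AddCommMonoid M] (H : Finset (Fin m → Fin k))
    (G : Finset (Fin m → Fin k) → M) (hG : G ∅ = 0) :
    ∑ e ∈ oigEdges H, G e.2 = ∑ i, ∑ f, G {h ∈ H | dropCoord i h = f} := by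
  rw [← sum_fiberwise (oigEdges H) Prod.fst]
  refine sum_congr rfl fun i _ => ?_
  have hfiber : {e ∈ oigEdges H | e.1 = i} = (H.image (edgeOf H i)).image (Prod.mk i) := by
    ext ⟨j, e⟩
    simp only [oigEdges, mem_filter, mem_image, mem_product, mem_univ, true_and, Prod.mk.injEq,
      Prod.exists]
    constructor
    · rintro ⟨⟨j, g, hg, rfl, rfl⟩, rfl⟩; exact ⟨_, ⟨g, hg, rfl⟩, rfl, rfl⟩
    · rintro ⟨_, ⟨g, hg, rfl⟩, rfl, rfl⟩; exact ⟨⟨i, g, hg, rfl, rfl⟩, rfl⟩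
  rw [hfiber, sum_image fun _ _ _ _ h => (Prod.mk.inj h).2, funext (edgeOf_eq_filter H i),
    sum_image_filter_eq_sum_fiber H _ G hG]

end OneInclusion

section Layers
variable {m k ℓ : ℕ}

theorem injective_init_last {α : Type*} :
    Injective fun h : Fin (m + 1) → α => (Fin.init h, h (Fin.last m)) :=
  Prod.swap_injective.comp (Fin.snocEquiv _).symm.injective

theorem card_filter_init_eq_le (H : Finset (Fin (m + 1) → Fin k)) (g : Fin m → Fin k) :
    #{h ∈ H | Fin.init h = g} ≤ k :=
  (card_filter_eq_le_card injective_init_last H g).trans_eq (Fintype.card_fin k)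

/-- `layer H t × {t - 1}` is the slice at height `t - 1` of `H` shifted down in its last
coordinate. -/
def layer (H : Finset (Fin (m + 1) → Fin k)) (t : ℕ) : Finset (Fin m → Fin k) :=
  {g ∈ H.image Fin.init | t ≤ #{h ∈ H | Fin.init h = g}}

theorem sum_card_layer (H : Finset (Fin (m + 1) → Fin k)) :
    ∑ t ∈ Ioc 0 k, #(layer H t) = #H := by
  unfold layer
  rw [← sum_tsub_eq_sum_card_filter_le _ _ fun g _ => card_filter_init_eq_le H g]
  simpa using (card_eq_sum_card_image _ _).symm

theorem dropCoord_last_eq_iff {α : Type*} {h h' : Fin (m + 1) → α} :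
    dropCoord (Fin.last m) h' = dropCoord (Fin.last m) h ↔ Fin.init h' = Fin.init h := by
  rw [dropCoord_eq_iff, Fin.forall_fin_succ', funext_iff]
  simp [Fin.init, Fin.castSucc_ne_last]

theorem dropCoord_castSucc_eq_iff {α : Type*} {i : Fin m} {h h' : Fin (m + 1) → α} :
    dropCoord i.castSucc h' = dropCoord i.castSucc h ↔
      (dropCoord i (Fin.init h'), h' (Fin.last m)) =
        (dropCoord i (Fin.init h), h (Fin.last m)) := by
  simp [dropCoord_eq_iff, Fin.forall_fin_succ', Fin.init, (Fin.castSucc_lt_last i).ne']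

theorem dirExcess_last (H : Finset (Fin (m + 1) → Fin k)) :
    dirExcess ℓ H (Fin.last m) = ∑ t ∈ Ioc ℓ k, #(layer H t) := by
  unfold dirExcess layer
  rw [sum_fiber_congr H (π' := Fin.init) (fun _ _ => dropCoord_last_eq_iff) (fun e => #e - ℓ)
      (by simp), ← sum_subset (subset_univ (H.image Fin.init)) ?_]
  · exact sum_tsub_eq_sum_card_filter_le _ _ fun g _ => card_filter_init_eq_le H g
  · intro g _ hg
    rw [filter_eq_empty_iff.2 fun h hh hhg => hg (mem_image.2 ⟨h, hh, hhg⟩)]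
    simp

theorem filter_layer (H : Finset (Fin (m + 1) → Fin k)) (t : ℕ) (p : (Fin m → Fin k) → Prop)
    [DecidablePred p] : {g ∈ layer H t | p g} = layer {h ∈ H | p (Fin.init h)} t := by
  have hfib : ∀ g, p g → {h ∈ H | p (Fin.init h) ∧ Fin.init h = g} = {h ∈ H | Fin.init h = g} :=
    fun g hg => filter_congr fun h _ => ⟨And.right, fun hh => ⟨hh ▸ hg, hh⟩⟩
  ext g
  simp only [layer, mem_filter, mem_image, filter_filter]
  constructor
  · rintro ⟨⟨h, hH, rfl⟩, ht, hp⟩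
    exact ⟨⟨h, ⟨hH, hp⟩, rfl⟩, (hfib _ hp).symm ▸ ht⟩
  · rintro ⟨⟨h, ⟨hH, hp⟩, rfl⟩, ht⟩
    exact ⟨⟨h, hH, rfl⟩, hfib _ hp ▸ ht, hp⟩

theorem dirExcess_castSucc_le (H : Finset (Fin (m + 1) → Fin k)) (i : Fin m) :
    dirExcess ℓ H i.castSucc ≤ ∑ t ∈ Ioc 0 k, dirExcess ℓ (layer H t) i := by
  unfold dirExcess
  rw [sum_fiber_congr H (π' := fun h => (dropCoord i (Fin.init h), h (Fin.last m)))
      (fun _ _ => dropCoord_castSucc_eq_iff) (fun e => #e - ℓ) (by simp),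
    Fintype.sum_prod_type, sum_comm (s := Ioc 0 k)]
  refine sum_le_sum fun f _ => ?_
  simp only [filter_layer, Prod.mk.injEq, ← filter_filter]
  simpa [layer] using
    sum_card_col_tsub_le injective_init_last {h ∈ H | dropCoord i (Fin.init h) = f} ℓ

theorem expDim_layer_le (hℓ : 1 ≤ ℓ) (H : Finset (Fin (m + 1) → Fin k)) (t : ℕ) :
    expDim ℓ (layer H t) ≤ expDim ℓ H :=
  (expDim_mono hℓ (filter_subset _ _)).trans (expDim_image_comp_le hℓ H Fin.castSucc)

theorem expDim_layer_lt (hℓ : 1 ≤ ℓ) (H : Finset (Fin (m + 1) → Fin k)) {t : ℕ} (ht : ℓ < t)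
    (hne : (layer H t).Nonempty) : expDim ℓ (layer H t) < expDim ℓ H := by
  set d := expDim ℓ (layer H t)
  obtain ⟨τ, hτ⟩ := exists_expDim_witness hℓ hne
  set τ' : Fin (d + 1) → Fin (m + 1) := Fin.snoc (fun j => (τ j).castSucc) (Fin.last m)
  set A := (layer H t).image fun g j => g (τ j)
  set B := H.image fun h j => h (τ' j)
  have hfiber : ∀ p ∈ A, ℓ + 1 ≤ #{b ∈ B | Fin.init b = p} := by
    intro p hp
    obtain ⟨g, hg, rfl⟩ := mem_image.1 hp
    refine (ht.trans_le (mem_filter.1 hg).2).trans_le (card_le_card_of_injOn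
      (fun h j => h (τ' j)) (fun h hh => ?_) fun h hh h' hh' heq => ?_)
    · obtain ⟨hH, rfl⟩ := mem_filter.1 hh
      refine mem_filter.2 ⟨mem_image_of_mem _ hH, funext fun j => ?_⟩
      simp [τ', Fin.init]
    · have hlast := congrFun heq (Fin.last d)
      simp only [τ', Fin.snoc_last] at hlast
      rw [← Fin.snoc_init_self h, ← Fin.snoc_init_self h', (mem_filter.1 hh).2,
        (mem_filter.1 hh').2, hlast]
  refine le_expDim hℓ τ' ?_
  calc (ℓ + 1) ^ (d + 1) = (ℓ + 1) * (ℓ + 1) ^ d := pow_succ' _ _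
    _ ≤ (ℓ + 1) * #A := Nat.mul_le_mul_left _ hτ
    _ ≤ ∑ p ∈ A, #{b ∈ B | Fin.init b = p} := by
      rw [mul_comm, ← smul_eq_mul, ← sum_const]
      exact sum_le_sum hfiber
    _ ≤ #B := by
      rw [sum_card_fiberwise_eq_card_filter]
      exact card_filter_le _ _

end Layers

theorem sum_dirExcess_le {m k ℓ : ℕ} (hℓ : 1 ≤ ℓ) (H : Finset (Fin m → Fin k)) :
    ∑ i, dirExcess ℓ H i ≤ expDim ℓ H * #H := by
  induction m with
  | zero => simp
  | succ m ih =>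
    have hlayer : ∀ t ∈ Ioc 0 k, ∑ i, dirExcess ℓ (layer H t) i +
        (if ℓ < t then #(layer H t) else 0) ≤ expDim ℓ H * #(layer H t) := by
      intro t _
      refine (Nat.add_le_add_right (ih _) _).trans ?_
      rcases (layer H t).eq_empty_or_nonempty with hempty | hne
      · simp [hempty]
      split_ifs with ht
      · have := expDim_layer_lt hℓ H ht hne
        nlinarith
      · simpa using Nat.mul_le_mul_right _ (expDim_layer_le hℓ H t)
    have hlast : ∑ t ∈ Ioc ℓ k, #(layer H t) =
        ∑ t ∈ Ioc 0 k, if ℓ < t then #(layer H t) else 0 := by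
      rw [← sum_filter]
      congr 1
      ext t
      simp only [mem_filter, mem_Ioc]
      omega
    calc ∑ i, dirExcess ℓ H i
        = ∑ i : Fin m, dirExcess ℓ H i.castSucc + dirExcess ℓ H (Fin.last m) :=
          Fin.sum_univ_castSucc _
      _ ≤ ∑ i : Fin m, ∑ t ∈ Ioc 0 k, dirExcess ℓ (layer H t) i +
          ∑ t ∈ Ioc 0 k, if ℓ < t then #(layer H t) else 0 := by
          rw [dirExcess_last, hlast]
          exact Nat.add_le_add_right (sum_le_sum fun i _ => dirExcess_castSucc_le H i) _
      _ ≤ ∑ t ∈ Ioc 0 k, expDim ℓ H * #(layer H t) := by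
          rw [sum_comm, ← sum_add_distrib]
          exact sum_le_sum hlayer
      _ = expDim ℓ H * #H := by rw [← mul_sum, sum_card_layer]

theorem hallCondition_oigEdges {m k ℓ : ℕ} (hℓ : 1 ≤ ℓ) (H : Finset (Fin m → Fin k)) :
    HallCondition (oigEdges H) Prod.snd (fun e => #e.2 - ℓ) (fun _ => expDim ℓ H) := by
  intro W
  calc ∑ e ∈ oigEdges H, ((#e.2 - ℓ) - #(e.2 \ W))
      ≤ ∑ e ∈ oigEdges H, (#(e.2 ∩ W) - ℓ) := sum_le_sum fun e _ => by
        have := card_sdiff_add_card_inter e.2 W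
        omega
    _ = ∑ i, dirExcess ℓ (H ∩ W) i := by
        rw [sum_oigEdges H (fun e => #(e ∩ W) - ℓ) (by simp)]
        simp only [dirExcess, filter_inter]
    _ ≤ expDim ℓ (H ∩ W) * #(H ∩ W) := sum_dirExcess_le hℓ _
    _ ≤ expDim ℓ H * #W :=
        Nat.mul_le_mul (expDim_mono hℓ inter_subset_left) (card_le_card inter_subset_right)
    _ = ∑ _v ∈ W, expDim ℓ H := by rw [sum_const, smul_eq_mul, mul_comm]

theorem orientation_outdeg_le_expDim_general (k m ℓ : ℕ) (hℓ : 1 ≤ ℓ)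
    (H : Finset (Fin m → Fin k)) :
    ∃ σ : Fin m × Finset (Fin m → Fin k) → Finset (Fin m → Fin k),
      (∀ e ∈ oigEdges H, σ e ⊆ e.2 ∧ (σ e).card ≤ ℓ) ∧
      ∀ v ∈ H, ((oigEdges H).filter fun e => v ∈ e.2 ∧ v ∉ σ e).card ≤ expDim ℓ H := by
  obtain ⟨X, hX, hdeg⟩ := (hallCondition_oigEdges hℓ H).exists_selection
  refine ⟨fun e => e.2 \ X e, fun e he => ⟨sdiff_subset, ?_⟩, fun v _ => ?_⟩
  · rw [card_sdiff_of_subset (hX e he).1, (hX e he).2]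
    omega
  · refine le_of_eq_of_le (congrArg card (filter_congr fun e he => ?_)) (hdeg v)
    have hXe := (hX e he).1
    simp only [mem_sdiff, not_and, not_not]
    exact ⟨fun h => h.2 h.1, fun h => ⟨hXe h, fun _ => h⟩⟩

/-- Every nonempty finite class `H ⊆ [k]^m` admits an `ℓ`-list orientation of its
one-inclusion graph (each edge `e` is assigned a subset `σ e ⊆ e` of size at most `ℓ`)
whose maximum `ℓ`-outdegree is at most the `ℓ`-exponential dimension of `H`. -/
theorem orientation_outdeg_le_expDim (k m ℓ : ℕ) (hℓ : 1 ≤ ℓ)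
    (H : Finset (Fin m → Fin k)) (hne : H.Nonempty) :
    ∃ σ : Fin m × Finset (Fin m → Fin k) → Finset (Fin m → Fin k),
      (∀ e ∈ oigEdges H, σ e ⊆ e.2 ∧ (σ e).card ≤ ℓ) ∧
      ∀ v ∈ H, ((oigEdges H).filter fun e => v ∈ e.2 ∧ v ∉ σ e).card ≤ expDim ℓ H :=
  orientation_outdeg_le_expDim_general k m ℓ hℓ H
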